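/- arXiv:2505.10263 — 5 statements merged into one kernel-verified Lean document; each statement's English description precedes it below -/
import Mathlib

section
/- Let Γ be a loopless finite graph and let α be a nilpotent animation of Γ, i.e., a partial function α on the vertex set V with α(v) adjacent to v whenever α(v) is defined, and α^n = ⊥ everywhere for some n ≥ 1. Let v, w ∈ V be adjacent vertices and let β = α[v ← w] be the partial function agreeing with α everywhere except that β(v) = w. Then β is a nilpotent animation of Γ if and only if w ⪯_α v is false, where u ⪯_α u' means α^n(u) = u' for some n ≥ 0. -/
/-!
If `w ⪯_α v`, the α-path from `w` to `v` is untouched by the surgery up to its first visit to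
`v`, so `v → w ⇝ v` is a β-cycle. Conversely, a β-cycle avoiding `v` is an α-cycle, and a β-cycle
through `v` yields a β-path from `w = β(v)` to `v` whose first visit to `v` again only uses values
of α, giving `w ⪯_α v`. On a finite vertex set nilpotency is the absence of periodic points.
-/

/-- One step of a partial function `φ : U ⇀ U`, as a total map on `Option U` sending `⊥ = none`
to itself. -/
def pstep {U : Type*} (φ : U → Option U) : Option U → Option U := fun o => o.bind φ

/-- The `n`-fold iterate `φ^n` of a partial function `φ : U ⇀ U`. -/
def piter {U : Type*} (φ : U → Option U) (n : ℕ) : Option U → Option U := (pstep φ)^[n]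

/-- The preorder `⪯_φ`: `v ⪯_φ w` iff `φ^n(v) = w` for some `n ≥ 0`. -/
def ple {U : Type*} (φ : U → Option U) (v w : U) : Prop :=
  ∃ n : ℕ, piter φ n (some v) = some w

/-- `u` is `φ`-periodic iff `φ^n(u) = u` for some `n ≥ 1`. -/
def pperiodic {U : Type*} (φ : U → Option U) (u : U) : Prop :=
  ∃ n : ℕ, 0 < n ∧ piter φ n (some u) = some u

def pnilpotent {U : Type*} (φ : U → Option U) : Prop :=
  ∃ n : ℕ, 0 < n ∧ ∀ a : U, piter φ n (some a) = none

section PartialIterates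

variable {U : Type*} {φ : U → Option U}

lemma piter_add (m n : ℕ) (o : Option U) : piter φ (m + n) o = piter φ m (piter φ n o) :=
  Function.iterate_add_apply _ m n o

lemma piter_succ (n : ℕ) (o : Option U) : piter φ (n + 1) o = piter φ n (pstep φ o) :=
  Function.iterate_succ_apply _ n o

lemma piter_succ' (n : ℕ) (o : Option U) : piter φ (n + 1) o = pstep φ (piter φ n o) :=
  Function.iterate_succ_apply' _ n o

lemma piter_eq_none_of_le {m n : ℕ} {o : Option U} (h : piter φ m o = none) (hmn : m ≤ n) :
    piter φ n o = none := by
  rw [← Nat.sub_add_cancel hmn, piter_add, h]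
  exact Function.iterate_fixed rfl _

lemma pperiodic_of_piter_eq_of_lt {i j : ℕ} {o : Option U} {u : U} (hij : i < j)
    (hi : piter φ i o = some u) (hj : piter φ j o = some u) : pperiodic φ u := by
  refine ⟨j - i, Nat.sub_pos_of_lt hij, ?_⟩
  rw [← hi, ← piter_add, Nat.sub_add_cancel hij.le, hj, hi]

lemma pperiodic_of_piter_eq {u u' : U} {j : ℕ} (hu : pperiodic φ u)
    (h : piter φ j (some u) = some u') : pperiodic φ u' := by
  obtain ⟨m, hm, hper⟩ := hu
  have hper' : Function.IsPeriodicPt (pstep φ) m (some u) := hper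
  exact ⟨m, hm, h ▸ hper'.apply_iterate j⟩

lemma pperiodic_iff_ple {v w : U} (h : φ v = some w) : pperiodic φ v ↔ ple φ w v := by
  have hstep : pstep φ (some v) = some w := h
  constructor
  · rintro ⟨_ | n, hpos, hn⟩
    · exact absurd hpos (lt_irrefl 0)
    · exact ⟨n, by rwa [piter_succ, hstep] at hn⟩
  · rintro ⟨n, hn⟩
    exact ⟨n + 1, n.succ_pos, by rw [piter_succ, hstep, hn]⟩

lemma not_pperiodic_of_pnilpotent (h : pnilpotent φ) (u : U) : ¬ pperiodic φ u := by
  rintro ⟨m, hm, hu⟩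
  obtain ⟨N, -, hN⟩ := h
  have hper : Function.IsPeriodicPt (pstep φ) m (some u) := hu
  have hsome : piter φ (m * N) (some u) = some u := hper.mul_const N
  rw [piter_eq_none_of_le (hN u) (Nat.le_mul_of_pos_left N hm)] at hsome
  cases hsome

lemma exists_piter_eq_none_of_forall_not_pperiodic [Finite U] (h : ∀ u, ¬ pperiodic φ u)
    (a : U) : ∃ n, piter φ n (some a) = none := by
  by_contra! hsome
  choose f hf using fun n => Option.ne_none_iff_exists'.1 (hsome n)
  obtain ⟨i, j, hij, hfij⟩ := Finite.exists_ne_map_eq_of_infinite f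
  rcases hij.lt_or_gt with hlt | hlt
  · exact h _ (pperiodic_of_piter_eq_of_lt hlt (hfij ▸ hf i) (hf j))
  · exact h _ (pperiodic_of_piter_eq_of_lt hlt (hf j) (hfij ▸ hf i))

lemma pnilpotent_iff_forall_not_pperiodic [Finite U] :
    pnilpotent φ ↔ ∀ u, ¬ pperiodic φ u := by
  refine ⟨not_pperiodic_of_pnilpotent, fun h => ?_⟩
  cases nonempty_fintype U
  choose n hn using exists_piter_eq_none_of_forall_not_pperiodic h
  exact ⟨Finset.univ.sup n + 1, Nat.succ_pos _, fun a =>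
    piter_eq_none_of_le (hn a) ((Finset.le_sup (Finset.mem_univ a)).trans (Nat.le_succ _))⟩

end PartialIterates

section Surgery

variable {U : Type*} {φ ψ : U → Option U} {v : U}

lemma piter_eq_of_forall_ne (hφψ : ∀ u, u ≠ v → φ u = ψ u) {k : ℕ} {o : Option U}
    (h : ∀ j < k, piter φ j o ≠ some v) : piter φ k o = piter ψ k o := by
  induction k with
  | zero => rfl
  | succ k ih =>
    rw [piter_succ', piter_succ', ← ih fun j hj => h j (Nat.lt_succ_of_lt hj)]
    cases hk : piter φ k o with
    | none => rfl
    | some u => exact hφψ u fun huv => h k k.lt_succ_self (hk.trans (congrArg some huv))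

lemma ple_of_forall_ne (hφψ : ∀ u, u ≠ v → φ u = ψ u) {u : U} (hle : ple φ u v) :
    ple ψ u v := by
  classical
  refine ⟨Nat.find hle, ?_⟩
  rw [← piter_eq_of_forall_ne hφψ fun j hj => Nat.find_min hle hj]
  exact Nat.find_spec hle

lemma pperiodic_or_pperiodic_of_forall_ne (hφψ : ∀ u, u ≠ v → φ u = ψ u) {u : U}
    (hu : pperiodic φ u) : pperiodic ψ u ∨ pperiodic φ v := by
  by_cases hhit : ∃ j, piter φ j (some u) = some v
  · obtain ⟨j, hj⟩ := hhit
    exact Or.inr (pperiodic_of_piter_eq hu hj)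
  · simp only [not_exists] at hhit
    obtain ⟨m, hm, hper⟩ := hu
    exact Or.inl ⟨m, hm, by rw [← piter_eq_of_forall_ne hφψ fun j _ => hhit j, hper]⟩

variable [DecidableEq U]

lemma ple_update_iff (x : Option U) {u : U} : ple (Function.update φ v x) u v ↔ ple φ u v :=
  ⟨ple_of_forall_ne fun _ (hu : _ ≠ v) => Function.update_of_ne hu x φ,
    ple_of_forall_ne fun _ (hu : _ ≠ v) => (Function.update_of_ne hu x φ).symm⟩

lemma pperiodic_update_self_iff (w : U) :
    pperiodic (Function.update φ v (some w)) v ↔ ple φ w v :=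
  (pperiodic_iff_ple (Function.update_self v (some w) φ)).trans (ple_update_iff _)

end Surgery

theorem redefine_nilpotent_animation_general {V : Type*} [Fintype V] [DecidableEq V]
    (α : V → Option V)
    (hnil : ∃ n : ℕ, 0 < n ∧ ∀ a : V, piter α n (some a) = none)
    (v w : V) :
    (∃ n : ℕ, 0 < n ∧ ∀ a : V, piter (Function.update α v (some w)) n (some a) = none)
      ↔ ¬ ple α w v := by
  have hα : ∀ u, ¬ pperiodic α u := not_pperiodic_of_pnilpotent hnil
  change pnilpotent _ ↔ _
  rw [pnilpotent_iff_forall_not_pperiodic, ← pperiodic_update_self_iff]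
  refine ⟨fun h => h v, fun hv u hu => ?_⟩
  have hβα : ∀ x, x ≠ v → Function.update α v (some w) x = α x :=
    fun _ hx => Function.update_of_ne hx _ α
  exact (pperiodic_or_pperiodic_of_forall_ne hβα hu).elim (hα u) hv

/-- **Redefining nilpotent animations (minor surgery).**
Let `Γ` be a loopless finite graph with (symmetric, irreflexive) adjacency relation `Adj`, and
let `α` be a nilpotent animation of `Γ`: a partial function on the vertices sending each vertex
in its domain to a neighbour, some iterate of which is nowhere defined.  Let `v ∼ w` and let
`β = α[v ← w]` agree with `α` except that `β(v) = w`.  Then `β` is a nilpotent animation of `Γ`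
if and only if `w ⪯_α v` fails. -/
theorem redefine_nilpotent_animation {V : Type*} [Fintype V] [DecidableEq V]
    (Adj : V → V → Prop) (hsym : ∀ a b, Adj a b → Adj b a) (hloopless : ∀ a, ¬ Adj a a)
    (α : V → Option V) (hanim : ∀ a b, α a = some b → Adj a b)
    (hnil : ∃ n : ℕ, 0 < n ∧ ∀ a : V, piter α n (some a) = none)
    (v w : V) (hvw : Adj v w) :
    (∃ n : ℕ, 0 < n ∧ ∀ a : V, piter (Function.update α v (some w)) n (some a) = none)
      ↔ ¬ ple α w v :=
  redefine_nilpotent_animation_general α hnil v w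
end

section
/- Let Γ = (V,E) be a finite graph with n vertices and let d be the number of connected components of Γ that contain no odd cycle (loops count as odd cycles). Let Odd(Γ) denote the set of odd-periodic animations of Γ, i.e., animations all of whose periodic points have odd period. Then the maximal degree of an element of Odd(Γ) is exactly n − d. -/
/-- `α` is odd-periodic: every `α`-periodic point has odd (minimal) period. -/
def OddPeriodic {V : Type*} (α : V → Option V) : Prop :=
  ∀ (u : V) (m : ℕ), 0 < m → piter α m (some u) = some u →
    (∀ m' : ℕ, 0 < m' → piter α m' (some u) = some u → m ≤ m') → Odd m

/-! An odd-periodic animation leaves a vertex undefined in every component without an odd closed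
walk: otherwise it maps that finite component into itself, so it has a periodic point, and the
orbit of that point, whose minimal period is odd, is an odd closed walk.

Conversely, a shortest odd closed walk repeats no vertex, since a repetition would split it into
two shorter closed walks one of which is odd. Rotating one such cycle in each component that has
one, leaving a single vertex undefined in every other component, and letting each remaining vertex
step towards these, gives an animation whose periodic points all lie on the rotated odd cycles. -/

section Iterates

variable {V : Type*} {α : V → Option V}

theorem piter_none (α : V → Option V) (k : ℕ) : piter α k none = none :=
  Function.iterate_fixed rfl k

theorem piter_succ_some (α : V → Option V) (k : ℕ) (v : V) :
    piter α (k + 1) (some v) = piter α k (α v) :=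
  Function.iterate_succ_apply _ _ _

theorem isSome_of_piter_eq {p : ℕ} {u : V} (hp : 0 < p) (h : piter α p (some u) = some u) :
    (α u).isSome := by
  obtain ⟨q, rfl⟩ := Nat.exists_eq_add_one_of_ne_zero hp.ne'
  rw [piter_succ_some] at h
  cases hu : α u with
  | none => rw [hu, piter_none] at h; cases h
  | some w => rfl

theorem piter_orbit {f : ℕ → V} (hf : ∀ j, α (f j) = some (f (j + 1))) (i k : ℕ) :
    piter α k (some (f i)) = some (f (i + k)) := by
  induction k generalizing i with
  | zero => rfl
  | succ k ih => rw [piter_succ_some, hf, ih, Nat.add_right_comm, Nat.add_assoc]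

theorem rank_le_of_piter_eq (r : V → ℕ) (hr : ∀ v w, α v = some w → r w ≤ r v) {k : ℕ}
    {v w : V} (h : piter α k (some v) = some w) : r w ≤ r v := by
  induction k generalizing v with
  | zero => cases h; rfl
  | succ k ih =>
    rw [piter_succ_some] at h
    cases hv : α v with
    | none => rw [hv, piter_none] at h; cases h
    | some u => rw [hv] at h; exact (ih h).trans (hr v u hv)

theorem piter_congr {β : V → Option V} {T : Set V} (hαβ : ∀ v ∈ T, α v = β v)
    (hT : ∀ v ∈ T, ∀ w, β v = some w → w ∈ T) {u : V} (hu : u ∈ T) (k : ℕ) :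
    piter α k (some u) = piter β k (some u) := by
  induction k generalizing u with
  | zero => rfl
  | succ k ih =>
    rw [piter_succ_some, piter_succ_some, hαβ u hu]
    cases hw : β u with
    | none => rw [piter_none, piter_none]
    | some w => exact ih (hT u hu w hw)

/-- The minimal period of a point divides all its periods. -/
theorem oddPeriodic_iff : OddPeriodic α ↔ ∀ u p, 0 < p → piter α p (some u) = some u →
    ∃ m, Odd m ∧ piter α m (some u) = some u := by
  constructor
  · intro hodd u p hp hper
    have hper : Function.IsPeriodicPt (pstep α) p (some u) := hper
    exact ⟨_, hodd u _ (hper.minimalPeriod_pos hp) (Function.isPeriodicPt_minimalPeriod _ _)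
      fun m' hm' h => Function.IsPeriodicPt.minimalPeriod_le hm' h,
      Function.isPeriodicPt_minimalPeriod _ _⟩
  · intro h u m hm hper hmin
    obtain ⟨k, hk, hperk⟩ := h u m hm hper
    have hperm : Function.IsPeriodicPt (pstep α) m (some u) := hper
    have hperk : Function.IsPeriodicPt (pstep α) k (some u) := hperk
    have : m = Function.minimalPeriod (pstep α) (some u) :=
      le_antisymm (hmin _ (hperm.minimalPeriod_pos hm) (Function.isPeriodicPt_minimalPeriod _ _))
        (hperm.minimalPeriod_le hm)
    exact this ▸ hk.of_dvd_nat hperk.minimalPeriod_dvd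

end Iterates

section Extension

variable {V : Type*} {Adj : V → V → Prop}

variable (Adj) in
def reachIn (T : Set V) : ℕ → Set V
  | 0 => T
  | n + 1 => {v | ∃ w, Adj v w ∧ w ∈ reachIn T n}

theorem exists_mem_reachIn {T : Set V} {v t : V} (ht : t ∈ T)
    (h : Relation.ReflTransGen Adj v t) : ∃ n, v ∈ reachIn Adj T n := by
  induction h using Relation.ReflTransGen.head_induction_on with
  | refl => exact ⟨0, ht⟩
  | head hvw _ ih =>
    obtain ⟨n, hn⟩ := ih
    exact ⟨n + 1, _, hvw, hn⟩

theorem exists_rank_of_reachable {T : Set V}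
    (hT : ∀ v, ∃ t ∈ T, Relation.ReflTransGen Adj v t) :
    ∃ r : V → ℕ, (∀ v ∈ T, r v = 0) ∧ ∀ v ∉ T, ∃ w, Adj v w ∧ r w < r v := by
  classical
  have h v : ∃ n, v ∈ reachIn Adj T n :=
    let ⟨_, ht, hvt⟩ := hT v
    exists_mem_reachIn ht hvt
  refine ⟨fun v => Nat.find (h v), fun v hv => (Nat.find_eq_zero _).2 hv, fun v hv => ?_⟩
  obtain ⟨n, hn⟩ := Nat.exists_eq_add_one_of_ne_zero fun h0 => hv ((Nat.find_eq_zero (h v)).1 h0)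
  obtain ⟨w, hvw, hw⟩ : v ∈ reachIn Adj T (n + 1) := hn ▸ Nat.find_spec (h v)
  exact ⟨w, hvw, (Nat.find_min' _ hw).trans_lt (by simp only [hn]; omega)⟩

/-- Away from `T`, move one step closer to `T`. Then the distance to `T` never increases along `α`
and drops at the first step from outside `T`, so every periodic point of `α` lies in `T`, where
`α` and `β` have the same orbits. -/
theorem exists_extension_of_reachable {T : Set V} {β : V → Option V}
    (hβ : ∀ v ∈ T, ∀ w, β v = some w → Adj v w ∧ w ∈ T)
    (hT : ∀ v, ∃ t ∈ T, Relation.ReflTransGen Adj v t) :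
    ∃ α : V → Option V, (∀ v w, α v = some w → Adj v w) ∧
      (∀ v, α v = none ↔ v ∈ T ∧ β v = none) ∧ (OddPeriodic β → OddPeriodic α) := by
  classical
  obtain ⟨r, hrT, hdesc⟩ := exists_rank_of_reachable hT
  choose! next hnext hr using hdesc
  let α : V → Option V := fun v => if v ∈ T then β v else some (next v)
  have hαT : ∀ v ∈ T, α v = β v := fun v hv => if_pos hv
  have hαT' : ∀ v ∉ T, α v = some (next v) := fun v hv => if_neg hv
  have hstep : ∀ v w, α v = some w → Adj v w ∧ r w ≤ r v := by
    intro v w h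
    by_cases hv : v ∈ T
    · obtain ⟨hvw, hw⟩ := hβ v hv w (hαT v hv ▸ h)
      exact ⟨hvw, (hrT w hw).trans_le (Nat.zero_le _)⟩
    · obtain rfl := Option.some_inj.1 ((hαT' v hv).symm.trans h)
      exact ⟨hnext v hv, (hr v hv).le⟩
  have hper : ∀ u p, 0 < p → piter α p (some u) = some u → u ∈ T := by
    intro u p hp h
    by_contra hu
    obtain ⟨q, rfl⟩ := Nat.exists_eq_add_one_of_ne_zero hp.ne'
    rw [piter_succ_some, hαT' u hu] at h
    exact (rank_le_of_piter_eq r (fun v w h => (hstep v w h).2) h).not_gt (hr u hu)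
  refine ⟨α, fun v w h => (hstep v w h).1, fun v => ?_, fun hodd => ?_⟩
  · by_cases hv : v ∈ T <;> simp [α, hv]
  · rw [oddPeriodic_iff] at hodd ⊢
    intro u p hp h
    have hαβ := piter_congr hαT (fun v hv w hw => (hβ v hv w hw).2) (hper u p hp h)
    simpa only [hαβ] using hodd u p hp (hαβ p ▸ h)

end Extension

section OddCycle

variable {V : Type*} {Adj : V → V → Prop}

variable (Adj) in
def HasOddClosedWalk (c : Quot Adj) : Prop :=
  ∃ (w : V) (f : ℕ → V) (m : ℕ), Quot.mk Adj w = c ∧ Odd m ∧ f 0 = w ∧ f m = w ∧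
    ∀ i < m, Adj (f i) (f (i + 1))

variable (Adj) in
def IsClosedWalk (f : ℕ → V) (m : ℕ) : Prop :=
  f m = f 0 ∧ ∀ i < m, Adj (f i) (f (i + 1))

variable (Adj) in
def IsPeriodicWalk (f : ℕ → V) (m : ℕ) : Prop :=
  Function.Periodic f m ∧ ∀ k, Adj (f k) (f (k + 1))

theorem hasOddClosedWalk_iff {c : Quot Adj} :
    HasOddClosedWalk Adj c ↔ ∃ m, ∃ f, Odd m ∧ IsClosedWalk Adj f m ∧ Quot.mk Adj (f 0) = c := by
  constructor
  · rintro ⟨_, f, m, rfl, hm, rfl, hfm, hadj⟩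
    exact ⟨m, f, hm, ⟨hfm, hadj⟩, rfl⟩
  · rintro ⟨m, f, hm, ⟨hfm, hadj⟩, rfl⟩
    exact ⟨f 0, f, m, rfl, hm, rfl, hfm, hadj⟩

namespace IsPeriodicWalk

variable {f : ℕ → V} {m : ℕ}

theorem mk_apply (hf : IsPeriodicWalk Adj f m) (k : ℕ) :
    Quot.mk Adj (f k) = Quot.mk Adj (f 0) := by
  induction k with
  | zero => rfl
  | succ k ih => exact (Quot.sound (hf.2 k)).symm.trans ih

theorem of_isClosedWalk (hm : 0 < m) (hf : IsClosedWalk Adj f m) :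
    IsPeriodicWalk Adj (fun k => f (k % m)) m := by
  refine ⟨fun k => by simp only [Nat.add_mod_right], fun k => ?_⟩
  have hk := Nat.mod_lt k hm
  show Adj (f (k % m)) (f ((k + 1) % m))
  rw [← Nat.mod_add_mod k m 1]
  rcases Nat.lt_or_ge (k % m + 1) m with h | h
  · rw [Nat.mod_eq_of_lt h]
    exact hf.2 _ hk
  · have hlast : k % m + 1 = m := by omega
    rw [hlast, Nat.mod_self, ← hf.1]
    simpa only [hlast] using hf.2 _ hk

/-- If the odd closed walk `f` is shortest in its component, a repeated vertex would split it into
two shorter closed walks, one of them odd. -/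
theorem dvd_of_apply_add_eq (hf : IsPeriodicWalk Adj f m) (hm : Odd m)
    (hmin : ∀ m' < m, Odd m' → ∀ g, IsClosedWalk Adj g m' →
      Quot.mk Adj (g 0) ≠ Quot.mk Adj (f 0))
    {i d : ℕ} (h : f (i + d) = f i) : m ∣ d := by
  set r := d % m
  have hr : f (i + r) = f i := by
    rw [← h, ← Nat.mod_add_div d m, ← Nat.add_assoc, mul_comm]
    exact (hf.1.nat_mul _ _).symm
  refine Nat.dvd_of_mod_eq_zero (Nat.eq_zero_of_not_pos fun hr0 => ?_)
  have hrm : r < m := Nat.mod_lt d hm.pos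
  have hleft : IsClosedWalk Adj (fun k => f (i + k)) r := ⟨hr, fun k _ => hf.2 _⟩
  have hright : IsClosedWalk Adj (fun k => f (i + r + k)) (m - r) := by
    refine ⟨?_, fun k _ => hf.2 _⟩
    show f (i + r + (m - r)) = f (i + r + 0)
    rw [Nat.add_assoc, Nat.add_sub_cancel' hrm.le, hf.1 i, Nat.add_zero, hr]
  rcases Nat.even_or_odd r with hev | hodd
  · exact hmin _ (Nat.sub_lt hm.pos hr0) (Nat.Odd.sub_even hrm.le hm hev) _ hright
      (by simp only [Nat.add_zero, hr, hf.mk_apply])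
  · exact hmin r hrm hodd _ hleft (hf.mk_apply i)

theorem apply_succ_eq_of_apply_eq (hf : IsPeriodicWalk Adj f m) (hm : Odd m)
    (hmin : ∀ m' < m, Odd m' → ∀ g, IsClosedWalk Adj g m' →
      Quot.mk Adj (g 0) ≠ Quot.mk Adj (f 0))
    {i j : ℕ} (h : f i = f j) : f (i + 1) = f (j + 1) := by
  wlog hij : i ≤ j generalizing i j
  · exact (this h.symm (le_of_not_ge hij)).symm
  obtain ⟨d, rfl⟩ := Nat.exists_eq_add_of_le hij
  obtain ⟨q, rfl⟩ := hf.dvd_of_apply_add_eq hm hmin h.symm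
  rw [Nat.add_right_comm, mul_comm]
  exact (hf.1.nat_mul q (i + 1)).symm

end IsPeriodicWalk

theorem HasOddClosedWalk.exists_oddCycle {c : Quot Adj} (hc : HasOddClosedWalk Adj c) :
    ∃ f m, Odd m ∧ IsPeriodicWalk Adj f m ∧ Quot.mk Adj (f 0) = c ∧
      ∀ i j, f i = f j → f (i + 1) = f (j + 1) := by
  classical
  rw [hasOddClosedWalk_iff] at hc
  obtain ⟨f, hm, hf, rfl⟩ := Nat.find_spec hc
  have hp := IsPeriodicWalk.of_isClosedWalk hm.pos hf
  refine ⟨_, _, hm, hp, by simp, fun i j => hp.apply_succ_eq_of_apply_eq hm ?_⟩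
  intro m' hm' hodd g hg hgc
  exact Nat.find_min hc hm' ⟨g, hodd, hg, hgc.trans (by simp)⟩

open Classical in
noncomputable def stepAlong (f : ℕ → V) (v : V) : Option V :=
  if h : ∃ i, f i = v then some (f (h.choose + 1)) else none

theorem stepAlong_apply {f : ℕ → V} (hf : ∀ i j, f i = f j → f (i + 1) = f (j + 1)) (i : ℕ) :
    stepAlong f (f i) = some (f (i + 1)) := by
  have h : ∃ j, f j = f i := ⟨i, rfl⟩
  rw [stepAlong, dif_pos h]
  exact congrArg some (hf _ _ h.choose_spec)

theorem exists_apply_eq_of_stepAlong_isSome {f : ℕ → V} {v : V} (h : (stepAlong f v).isSome) :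
    ∃ i, f i = v := by
  by_contra h'
  simp [stepAlong, h'] at h

end OddCycle

section Degree

variable {V : Type*} {Adj : V → V → Prop}

theorem exists_oddPeriodic_on_oddCycles :
    ∃ β : V → Option V, (∀ v w, β v = some w → Adj v w ∧ (β w).isSome) ∧ OddPeriodic β ∧
      (∀ c, HasOddClosedWalk Adj c → ∃ v, Quot.mk Adj v = c ∧ (β v).isSome) ∧
      ∀ v, (β v).isSome → HasOddClosedWalk Adj (Quot.mk Adj v) := by
  classical
  have hcyc (c : Quot Adj) : ∃ f : ℕ → V, HasOddClosedWalk Adj c →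
      ∃ m, Odd m ∧ IsPeriodicWalk Adj f m ∧ Quot.mk Adj (f 0) = c ∧
        ∀ i j, f i = f j → f (i + 1) = f (j + 1) := by
    by_cases hc : HasOddClosedWalk Adj c
    · obtain ⟨f, hf⟩ := hc.exists_oddCycle
      exact ⟨f, fun _ => hf⟩
    · exact ⟨fun _ => c.out, fun h => absurd h hc⟩
  choose F hF using hcyc
  let β : V → Option V := fun v =>
    if HasOddClosedWalk Adj (Quot.mk Adj v) then stepAlong (F (Quot.mk Adj v)) v else none
  have hβF c (hc : HasOddClosedWalk Adj c) j : β (F c j) = some (F c (j + 1)) := by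
    obtain ⟨m, -, hf, hf0, hsucc⟩ := hF c hc
    have hmk : Quot.mk Adj (F c j) = c := (hf.mk_apply j).trans hf0
    simp only [β, hmk, if_pos hc]
    exact stepAlong_apply hsucc j
  have hβ_isSome v (h : (β v).isSome) : ∃ c, HasOddClosedWalk Adj c ∧ ∃ j, F c j = v := by
    by_cases hc : HasOddClosedWalk Adj (Quot.mk Adj v)
    · simp only [β, if_pos hc] at h
      exact ⟨_, hc, exists_apply_eq_of_stepAlong_isSome h⟩
    · simp [β, hc] at h
  refine ⟨β, fun v w h => ?_, ?_, fun c hc => ?_, fun v h => ?_⟩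
  · obtain ⟨c, hc, j, rfl⟩ := hβ_isSome v (by simp [h])
    obtain ⟨m, -, hf, -⟩ := hF c hc
    rw [hβF c hc j, Option.some_inj] at h
    subst h
    exact ⟨hf.2 j, by rw [hβF c hc]; rfl⟩
  · rw [oddPeriodic_iff]
    intro u p hp h
    obtain ⟨c, hc, j, rfl⟩ := hβ_isSome u (isSome_of_piter_eq hp h)
    obtain ⟨m, hm, hf, -⟩ := hF c hc
    exact ⟨m, hm, by rw [piter_orbit (hβF c hc) j m, hf.1 j]⟩
  · obtain ⟨m, -, -, hf0, -⟩ := hF c hc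
    exact ⟨F c 0, hf0, by rw [hβF c hc]; rfl⟩
  · by_contra hc
    simp [β, hc] at h

theorem exists_isPeriodicPt_of_finite {S : Type*} [Finite S] [Nonempty S] (g : S → S) :
    ∃ x n, 0 < n ∧ Function.IsPeriodicPt g n x := by
  obtain ⟨i, j, hij, heq⟩ :=
    Finite.exists_ne_map_eq_of_infinite fun k => g^[k] (Classical.arbitrary S)
  wlog hlt : i < j generalizing i j
  · exact this j i hij.symm heq.symm (by omega)
  refine ⟨g^[i] (Classical.arbitrary S), j - i, by omega, ?_⟩
  show g^[j - i] (g^[i] _) = _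
  rw [← Function.iterate_add_apply, Nat.sub_add_cancel hlt.le, heq]

theorem OddPeriodic.hasOddClosedWalk [Finite V] {α : V → Option V}
    (hadj : ∀ v w, α v = some w → Adj v w) (hodd : OddPeriodic α) {c : Quot Adj}
    (hc : ∀ v, Quot.mk Adj v = c → (α v).isSome) : HasOddClosedWalk Adj c := by
  let S := {v : V // Quot.mk Adj v = c}
  have : Nonempty S := ⟨⟨c.out, c.out_eq⟩⟩
  let g : S → S := fun x => ⟨(α x.1).get (hc x.1 x.2),
    (Quot.sound (hadj _ _ (Option.some_get _).symm)).symm.trans x.2⟩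
  obtain ⟨y, p, hp, hy⟩ := exists_isPeriodicPt_of_finite g
  let f : ℕ → V := fun k => (g^[k] y).1
  have hf j : α (f j) = some (f (j + 1)) := by
    simp only [f, Function.iterate_succ_apply']
    exact (Option.some_get _).symm
  have hfp : piter α p (some (f 0)) = some (f 0) := by
    rw [piter_orbit hf, Nat.zero_add]
    simp only [f, hy.eq, Function.iterate_zero_apply]
  obtain ⟨m, hm, hfm⟩ := oddPeriodic_iff.1 hodd _ p hp hfp
  rw [piter_orbit hf, Nat.zero_add, Option.some_inj] at hfm
  exact hasOddClosedWalk_iff.2 ⟨m, f, hm, ⟨hfm, fun i _ => hadj _ _ (hf i)⟩, y.2⟩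

theorem card_isSome_eq [Fintype V] (α : V → Option V) :
    Nat.card {v // (α v).isSome} = Nat.card V - Nat.card {v // α v = none} := by
  classical
  simp only [Nat.card_eq_fintype_card, ← Fintype.card_subtype_compl, Option.ne_none_iff_isSome]

theorem card_out_eq {r : V → V → Prop} (p : Quot r → Prop) :
    Nat.card {v // p (Quot.mk r v) ∧ (Quot.mk r v).out = v} = Nat.card {c // p c} :=
  Nat.card_congr
    { toFun v := ⟨Quot.mk r v, v.2.1⟩
      invFun c := ⟨c.1.out, by rw [Quot.out_eq]; exact ⟨c.2, rfl⟩⟩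
      left_inv v := Subtype.ext v.2.2
      right_inv c := Subtype.ext c.1.out_eq }

theorem OddPeriodic.card_isSome_le [Fintype V] {α : V → Option V}
    (hadj : ∀ v w, α v = some w → Adj v w) (hodd : OddPeriodic α) :
    Nat.card {v // (α v).isSome} ≤ Nat.card V - Nat.card {c // ¬ HasOddClosedWalk Adj c} := by
  have h c (hc : ¬ HasOddClosedWalk Adj c) : ∃ v, Quot.mk Adj v = c ∧ α v = none := by
    by_contra! h'
    exact hc (hodd.hasOddClosedWalk hadj fun v hv => Option.ne_none_iff_isSome.1 (h' v hv))
  choose s hs hsα using h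
  have hle : Nat.card {c // ¬ HasOddClosedWalk Adj c} ≤ Nat.card {v // α v = none} :=
    Nat.card_le_card_of_injective (fun c => ⟨s c.1 c.2, hsα _ _⟩) fun c₁ c₂ h =>
      Subtype.ext <| (hs _ _).symm.trans <| (congrArg (Quot.mk Adj ∘ Subtype.val) h).trans (hs _ _)
  rw [card_isSome_eq]
  omega

theorem exists_oddPeriodic_card_isSome_eq [Fintype V] (hsym : ∀ a b, Adj a b → Adj b a) :
    ∃ α : V → Option V, (∀ v w, α v = some w → Adj v w) ∧ OddPeriodic α ∧
      Nat.card {v // (α v).isSome} = Nat.card V - Nat.card {c // ¬ HasOddClosedWalk Adj c} := by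
  obtain ⟨β, hβ, hβodd, hβc, hβv⟩ := exists_oddPeriodic_on_oddCycles (Adj := Adj)
  let T : Set V := {v | (β v).isSome ∨
    ¬ HasOddClosedWalk Adj (Quot.mk Adj v) ∧ (Quot.mk Adj v).out = v}
  have hreach v : ∃ t ∈ T, Relation.ReflTransGen Adj v t := by
    have : Std.Symm Adj := ⟨hsym⟩
    obtain ⟨t, ht, htv⟩ : ∃ t ∈ T, Quot.mk Adj t = Quot.mk Adj v := by
      by_cases hc : HasOddClosedWalk Adj (Quot.mk Adj v)
      · obtain ⟨t, htv, ht⟩ := hβc _ hc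
        exact ⟨t, Or.inl ht, htv⟩
      · exact ⟨_, Or.inr ⟨(Quot.out_eq _).symm ▸ hc, by rw [Quot.out_eq]⟩, Quot.out_eq _⟩
    exact ⟨t, ht, Relation.EqvGen.eqvGen_eq_reflTransGen Adj ▸ Quot.eqvGen_exact htv.symm⟩
  obtain ⟨α, hadj, hnone, hodd⟩ := exists_extension_of_reachable (T := T)
    (fun v _ w hw => ⟨(hβ v w hw).1, Or.inl (hβ v w hw).2⟩) hreach
  refine ⟨α, hadj, hodd hβodd, ?_⟩
  have hroot v : α v = none ↔
      ¬ HasOddClosedWalk Adj (Quot.mk Adj v) ∧ (Quot.mk Adj v).out = v := by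
    rw [hnone v]
    by_cases hv : (β v).isSome
    · simp [T, Option.ne_none_iff_isSome.2 hv, hβv v hv]
    · simp_all [T]
  rw [card_isSome_eq, Nat.card_congr (Equiv.subtypeEquivRight hroot),
    card_out_eq fun c => ¬ HasOddClosedWalk Adj c]

end Degree

/-- **Maximal degree of odd-periodic animations.**
Let `Γ` be a finite graph with `n` vertices and adjacency relation `Adj`, and let `d` be the
number of connected components of `Γ` containing no odd cycle; a component contains an odd
cycle precisely when it contains a closed walk of odd length (loops count as odd cycles, being
closed walks of length `1`).  Then the maximal degree of an odd-periodic animation of `Γ` is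
exactly `n − d`. -/
theorem odd_periodic_animations_max_degree {V : Type*} [Fintype V]
    (Adj : V → V → Prop) (hsym : ∀ a b, Adj a b → Adj b a)
    (n d : ℕ) (hn : Nat.card V = n)
    (hd : Nat.card {c : Quot Adj // ¬ ∃ (w : V) (f : ℕ → V) (m : ℕ),
        Quot.mk Adj w = c ∧ Odd m ∧ f 0 = w ∧ f m = w ∧
        ∀ i < m, Adj (f i) (f (i + 1))} = d) :
    (∃ α : V → Option V, (∀ a b, α a = some b → Adj a b) ∧ OddPeriodic α ∧
        Nat.card {v : V // (α v).isSome} = n - d) ∧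
    (∀ α : V → Option V, (∀ a b, α a = some b → Adj a b) → OddPeriodic α →
        Nat.card {v : V // (α v).isSome} ≤ n - d) := by
  change Nat.card {c // ¬ HasOddClosedWalk Adj c} = d at hd
  subst hn hd
  exact ⟨exists_oddPeriodic_card_isSome_eq hsym, fun α hadj hodd => hodd.card_isSome_le hadj⟩
end

section
/- Let Γ be a finite graph, H = Inc(Γ) its incidence hypergraph, V' ⊆ V and E' ⊆ E subsets with |V'| = |E'| = k. Suppose the induced subhypergraph H' = H[V' | E'] is connected and nondegenerate (no isolated vertices, no empty hyperedges). Then exactly one of the following holds: (U1) (V', E') is a unicyclic loopless subgraph of Γ and H' is its incidence hypergraph; or (U2) H' contains a unique loop e₀ (a hyperedge incident with exactly one vertex of V'), and (V', E' ∖ {e₀}) is a subtree of Γ. -/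
/-!
Every hyperedge of `H'` is an edge `s(a, b)` of `Γ` meeting `V'` in one or two vertices. Those
meeting it in two vertices are exactly the non-loop edges of `Γ` inside `V'`, and only they join
distinct vertices, so they alone already connect `V'`; a connected graph on `k` vertices has at
least `k - 1` edges. Hence at most one of the `k` hyperedges is a loop of `H'`: with none we are
in (U1), with one, `e₀`, the other `k - 1` edges form a spanning tree of `V'`. The cases exclude
each other since a loop of `H'` is not an edge of `Γ` inside `V'`.
-/

lemma SimpleGraph.Preconnected.card_vert_le_card_edgeSet_add_one {V : Type*} [Finite V]
    {G : SimpleGraph V} (h : G.Preconnected) : Nat.card V ≤ Nat.card G.edgeSet + 1 := by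
  cases isEmpty_or_nonempty V
  · simp
  · exact (SimpleGraph.Connected.mk h).card_vert_le_card_edgeSet_add_one

namespace Unicyclicity

variable {V : Type*}

def IsEdgeOn (V' : Finset V) (e : Sym2 V) : Prop :=
  ¬ e.IsDiag ∧ ∀ v ∈ e, v ∈ V'

def hyperAdj (V' : Finset V) (E' : Finset (Sym2 V)) (a b : V) : Prop :=
  a ∈ V' ∧ b ∈ V' ∧ ∃ e ∈ E', a ∈ e ∧ b ∈ e

def graphAdj (V' : Finset V) (E' : Finset (Sym2 V)) (a b : V) : Prop :=
  a ∈ V' ∧ b ∈ V' ∧ s(a, b) ∈ E'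

def graphOn (V' : Finset V) (E' : Finset (Sym2 V)) : SimpleGraph V' :=
  SimpleGraph.fromEdgeSet {e | e.map Subtype.val ∈ E'}

lemma isEdgeOn_mk {V' : Finset V} {a b : V} (ha : a ∈ V') (hb : b ∈ V') (hab : a ≠ b) :
    IsEdgeOn V' s(a, b) :=
  ⟨Sym2.mk_isDiag_iff.not.2 hab, fun _ hv => (Sym2.mem_iff.1 hv).elim (· ▸ ha) (· ▸ hb)⟩

lemma eqvGen_graphAdj_of_eqvGen_hyperAdj {V' : Finset V} {E' M : Finset (Sym2 V)}
    (hM : ∀ e ∈ E', IsEdgeOn V' e → e ∈ M) {v w : V}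
    (h : Relation.EqvGen (hyperAdj V' E') v w) : Relation.EqvGen (graphAdj V' M) v w := by
  refine (Relation.EqvGen.is_equivalence _).eqvGen_iff.1 (Relation.EqvGen.mono ?_ _ _ h)
  rintro a b ⟨ha, hb, e, he, hae, hbe⟩
  by_cases hab : a = b
  · exact hab ▸ Relation.EqvGen.refl a
  · rw [(Sym2.mem_and_mem_iff hab).1 ⟨hae, hbe⟩] at he
    exact Relation.EqvGen.rel _ _ ⟨ha, hb, hM _ he (isEdgeOn_mk ha hb hab)⟩

lemma graphOn_adj {V' : Finset V} {E' : Finset (Sym2 V)} {a b : V'} :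
    (graphOn V' E').Adj a b ↔ s(a.1, b.1) ∈ E' ∧ a ≠ b := by
  simp [graphOn]

lemma reachable_graphOn_of_eqvGen {V' : Finset V} {E' : Finset (Sym2 V)} {v w : V}
    (h : Relation.EqvGen (graphAdj V' E') v w) (hv : v ∈ V') (hw : w ∈ V') :
    (graphOn V' E').Reachable ⟨v, hv⟩ ⟨w, hw⟩ := by
  -- an `EqvGen` chain may leave `V'`, but only through reflexivity steps
  suffices v = w ∨ ∃ (hv : v ∈ V') (hw : w ∈ V'), (graphOn V' E').Reachable ⟨v, hv⟩ ⟨w, hw⟩ by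
    rcases this with rfl | ⟨_, _, hr⟩
    exacts [.rfl, hr]
  clear hv hw
  induction h with
  | rel a b hab =>
    obtain ⟨ha, hb, habE⟩ := hab
    by_cases hne : a = b
    · exact .inl hne
    · exact .inr ⟨ha, hb, (graphOn_adj.2 ⟨habE, fun h => hne (congrArg Subtype.val h)⟩).reachable⟩
  | refl a => exact .inl rfl
  | symm a b _ ih =>
    rcases ih with rfl | ⟨ha, hb, hr⟩
    · exact .inl rfl
    · exact .inr ⟨hb, ha, hr.symm⟩
  | trans a b c _ _ ih₁ ih₂ =>
    rcases ih₁ with rfl | ⟨ha, hb, hr₁⟩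
    · exact ih₂
    rcases ih₂ with rfl | ⟨hb', hc, hr₂⟩
    · exact .inr ⟨ha, hb, hr₁⟩
    · exact .inr ⟨ha, hc, hr₁.trans hr₂⟩

variable [DecidableEq V]

lemma filter_mem_eq_filter_toFinset (V' : Finset V) (e : Sym2 V) :
    V'.filter (· ∈ e) = e.toFinset.filter (· ∈ V') := by
  ext v; simp [Sym2.mem_toFinset, and_comm]

lemma card_filter_mem_le_two (V' : Finset V) (e : Sym2 V) : (V'.filter (· ∈ e)).card ≤ 2 := by
  rw [filter_mem_eq_filter_toFinset]
  exact (Finset.card_filter_le _ _).trans (by rw [Sym2.card_toFinset]; split_ifs <;> omega)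

lemma card_filter_mem_eq_two_iff (V' : Finset V) (e : Sym2 V) :
    (V'.filter (· ∈ e)).card = 2 ↔ IsEdgeOn V' e := by
  rw [filter_mem_eq_filter_toFinset]
  by_cases hdiag : e.IsDiag
  · have hle := Finset.card_filter_le e.toFinset (· ∈ V')
    rw [Sym2.card_toFinset_of_isDiag e hdiag] at hle
    simp only [IsEdgeOn, hdiag, not_true_eq_false, false_and, iff_false]
    omega
  · rw [← Sym2.card_toFinset_of_not_isDiag e hdiag, Finset.card_filter_eq_iff]
    simp [IsEdgeOn, hdiag, Sym2.mem_toFinset]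
lemma card_filter_mem_eq_one_iff {V' : Finset V} {e : Sym2 V} (he : ∃ v ∈ V', v ∈ e) :
    (V'.filter (· ∈ e)).card = 1 ↔ ¬ IsEdgeOn V' e := by
  obtain ⟨v, hv, hve⟩ := he
  have hpos : 0 < (V'.filter (· ∈ e)).card := Finset.card_pos.2 ⟨v, Finset.mem_filter.2 ⟨hv, hve⟩⟩
  rw [← card_filter_mem_eq_two_iff]
  have := card_filter_mem_le_two V' e
  omega

instance (V' : Finset V) : DecidablePred (IsEdgeOn V') :=
  fun e => decidable_of_iff _ (card_filter_mem_eq_two_iff V' e)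

lemma card_edgeSet_graphOn_le (V' : Finset V) (E' : Finset (Sym2 V)) :
    Nat.card (graphOn V' E').edgeSet ≤ (E'.filter (IsEdgeOn V')).card := by
  rw [← Nat.card_eq_finsetCard]
  refine Nat.card_le_card_of_injective
    (fun e => ⟨e.1.map Subtype.val, ?_⟩) fun e f h => ?_
  · obtain ⟨he, hdiag⟩ : e.1.map Subtype.val ∈ E' ∧ ¬ e.1.IsDiag := by
      simpa [graphOn, SimpleGraph.edgeSet_fromEdgeSet] using e.2
    refine Finset.mem_filter.2 ⟨he, (Sym2.isDiag_map Subtype.val_injective).not.2 hdiag, ?_⟩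
    rintro _ hv
    obtain ⟨a, -, rfl⟩ := Sym2.mem_map.1 hv
    exact a.2
  · exact Subtype.ext (Sym2.map.injective Subtype.val_injective (congrArg Subtype.val h))

lemma card_le_card_filter_isEdgeOn_add_one {V' : Finset V} {E' : Finset (Sym2 V)}
    (hconn : ∀ v ∈ V', ∀ w ∈ V', Relation.EqvGen (graphAdj V' E') v w) :
    V'.card ≤ (E'.filter (IsEdgeOn V')).card + 1 :=
  calc V'.card = Nat.card V' := (Nat.card_eq_finsetCard V').symm
    _ ≤ Nat.card (graphOn V' E').edgeSet + 1 :=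
      SimpleGraph.Preconnected.card_vert_le_card_edgeSet_add_one
        fun v w => reachable_graphOn_of_eqvGen (hconn v v.2 w w.2) v.2 w.2
    _ ≤ (E'.filter (IsEdgeOn V')).card + 1 := by
      grw [card_edgeSet_graphOn_le]

lemma card_filter_not_isEdgeOn_le_one {V' : Finset V} {E' : Finset (Sym2 V)}
    (hcard : V'.card = E'.card)
    (hconn : ∀ v ∈ V', ∀ w ∈ V', Relation.EqvGen (graphAdj V' E') v w) :
    (E'.filter (¬ IsEdgeOn V' ·)).card ≤ 1 := by
  have hsplit := Finset.card_filter_add_card_filter_not (s := E') (IsEdgeOn V')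
  have hcount := card_le_card_filter_isEdgeOn_add_one hconn
  omega

end Unicyclicity

open Unicyclicity in
theorem unicyclicity_lemma_general {V : Type*} [DecidableEq V]
    (V' : Finset V) (E' : Finset (Sym2 V))
    (k : ℕ) (hV'card : V'.card = k) (hE'card : E'.card = k)
    (hnondeg₂ : ∀ e ∈ E', ∃ v ∈ V', v ∈ e)
    (hconn : ∀ v ∈ V', ∀ w ∈ V',
      Relation.EqvGen (fun a b => a ∈ V' ∧ b ∈ V' ∧ ∃ e ∈ E', a ∈ e ∧ b ∈ e) v w) :
    Xor'
      -- (U1): (V', E') is a unicyclic loopless subgraph of Γ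
      ((∀ e ∈ E', ¬ e.IsDiag ∧ ∀ v ∈ e, v ∈ V') ∧
        (∀ v ∈ V', ∀ w ∈ V',
          Relation.EqvGen (fun a b => a ∈ V' ∧ b ∈ V' ∧ s(a, b) ∈ E') v w))
      -- (U2): H' has a unique loop e₀ and (V', E' ∖ {e₀}) is a subtree of Γ
      (∃ e₀ ∈ E', (V'.filter (· ∈ e₀)).card = 1 ∧
        (∀ e ∈ E', (V'.filter (· ∈ e)).card = 1 → e = e₀) ∧
        (∀ e ∈ E'.erase e₀, ¬ e.IsDiag ∧ ∀ v ∈ e, v ∈ V') ∧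
        (∀ v ∈ V', ∀ w ∈ V',
          Relation.EqvGen (fun a b => a ∈ V' ∧ b ∈ V' ∧ s(a, b) ∈ E'.erase e₀) v w) ∧
        (E'.erase e₀).card = V'.card - 1) := by
  have isLoop_iff (e) (he : e ∈ E') := card_filter_mem_eq_one_iff (hnondeg₂ e he)
  have hconnOn (M) (hM : ∀ e ∈ E', IsEdgeOn V' e → e ∈ M) (v) (hv : v ∈ V') (w) (hw : w ∈ V') :
      Relation.EqvGen (graphAdj V' M) v w :=
    eqvGen_graphAdj_of_eqvGen_hyperAdj hM (hconn v hv w hw)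
  have hloops := card_filter_not_isEdgeOn_le_one (hV'card.trans hE'card.symm)
    (hconnOn E' fun e he _ => he)
  by_cases hall : ∀ e ∈ E', IsEdgeOn V' e
  · exact .inl ⟨⟨hall, hconnOn E' fun e he _ => he⟩,
      fun ⟨e₀, he₀, hloop, _⟩ => (isLoop_iff e₀ he₀).1 hloop (hall e₀ he₀)⟩
  push Not at hall
  obtain ⟨e₀, he₀, hloop₀⟩ := hall
  have hunique (e) (he : e ∈ E') (hloop : ¬ IsEdgeOn V' e) : e = e₀ :=
    Finset.card_le_one.1 hloops e (Finset.mem_filter.2 ⟨he, hloop⟩) e₀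
      (Finset.mem_filter.2 ⟨he₀, hloop₀⟩)
  have herase (e) (he : e ∈ E'.erase e₀) : IsEdgeOn V' e := by
    obtain ⟨hne, he⟩ := Finset.mem_erase.1 he
    by_contra hloop
    exact hne (hunique e he hloop)
  refine .inr ⟨⟨e₀, he₀, (isLoop_iff e₀ he₀).2 hloop₀,
    fun e he hloop => hunique e he ((isLoop_iff e he).1 hloop), herase,
    hconnOn _ fun e he hedge => Finset.mem_erase.2 ⟨fun h => hloop₀ (h ▸ hedge), he⟩, ?_⟩,
    fun ⟨hall, _⟩ => hloop₀ (hall e₀ he₀)⟩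
  rw [Finset.card_erase_of_mem he₀]
  omega

/-- **The unicyclicity lemma.**
Let `Γ` be a finite graph (loops allowed) with edge set `Γedges ⊆ Sym2 V`, and let `V' ⊆ V`,
`E' ⊆ Γedges` with `|V'| = |E'| = k`.  Suppose the induced subhypergraph
`H' = Inc(Γ)[V' | E']` is nondegenerate (every vertex of `V'` lies on some edge of `E'` and
every edge of `E'` meets `V'`) and connected (walk-connectivity: the equivalence generated by
"lying on a common edge of `E'`" relates all vertices of `V'`).  Then exactly one of:
(U1) `(V', E')` is a unicyclic loopless subgraph of `Γ` (all edges of `E'` are non-loops with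
both endpoints in `V'`, and the graph `(V', E')` is connected; since `|V'| = |E'|` this graph
is unicyclic) and `H'` is its incidence hypergraph; or
(U2) `H'` has a unique loop `e₀` (an edge of `E'` incident with exactly one vertex of `V'`)
and `(V', E' ∖ {e₀})` is a subtree of `Γ` (all its edges non-loops with endpoints in `V'`,
connected on `V'`, with `|E' ∖ {e₀}| = |V'| − 1`; a connected graph with one fewer edges than
vertices is a tree). -/
theorem unicyclicity_lemma {V : Type*} [Fintype V] [DecidableEq V]
    (Γedges : Finset (Sym2 V)) (V' : Finset V) (E' : Finset (Sym2 V))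
    (hE'sub : E' ⊆ Γedges) (k : ℕ) (hV'card : V'.card = k) (hE'card : E'.card = k)
    (hnondeg₁ : ∀ v ∈ V', ∃ e ∈ E', v ∈ e)
    (hnondeg₂ : ∀ e ∈ E', ∃ v ∈ V', v ∈ e)
    (hV'ne : V'.Nonempty)
    (hconn : ∀ v ∈ V', ∀ w ∈ V',
      Relation.EqvGen (fun a b => a ∈ V' ∧ b ∈ V' ∧ ∃ e ∈ E', a ∈ e ∧ b ∈ e) v w) :
    Xor'
      -- (U1): (V', E') is a unicyclic loopless subgraph of Γ
      ((∀ e ∈ E', ¬ e.IsDiag ∧ ∀ v ∈ e, v ∈ V') ∧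
        (∀ v ∈ V', ∀ w ∈ V',
          Relation.EqvGen (fun a b => a ∈ V' ∧ b ∈ V' ∧ s(a, b) ∈ E') v w))
      -- (U2): H' has a unique loop e₀ and (V', E' ∖ {e₀}) is a subtree of Γ
      (∃ e₀ ∈ E', (V'.filter (· ∈ e₀)).card = 1 ∧
        (∀ e ∈ E', (V'.filter (· ∈ e)).card = 1 → e = e₀) ∧
        (∀ e ∈ E'.erase e₀, ¬ e.IsDiag ∧ ∀ v ∈ e, v ∈ V') ∧
        (∀ v ∈ V', ∀ w ∈ V',
          Relation.EqvGen (fun a b => a ∈ V' ∧ b ∈ V' ∧ s(a, b) ∈ E'.erase e₀) v w) ∧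
        (E'.erase e₀).card = V'.card - 1) :=
  unicyclicity_lemma_general V' E' k hV'card hE'card hnondeg₂ hconn
end

section
/- Let R be a commutative ring, A ∈ Mat_{n×m}(R), r ∈ R, and let Ã be the (n+m)×m matrix obtained by stacking A on top of r·1_m (r times the m×m identity matrix). Then for every 0 ≤ k ≤ m, the ideal generated by the k×k minors of à equals the sum ∑_{i=0}^{k} r^i · I_{k−i}(A), where I_j(A) denotes the ideal of R generated by the j×j minors of A (with I_0(A) = R). -/
/-- The ideal of `R` generated by the `k×k` minors of a matrix `A` (by convention this is the
unit ideal for `k = 0`, the `0×0` determinant being `1`). -/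
def minorsIdeal {R : Type*} [CommRing R] {ι κ : Type*} (A : Matrix ι κ R) (k : ℕ) :
    Ideal R :=
  Ideal.span {p : R | ∃ (r : Fin k → ι) (c : Fin k → κ),
    Function.Injective r ∧ Function.Injective c ∧ p = (A.submatrix r c).det}

/-!
Laplace expansion along a row `r • eᵦ` of the scalar block shows that a `k`-minor of `Ã`
either vanishes (when `b` is not among its columns) or is `± r` times a `(k - 1)`-minor of `Ã`;
a minor using only rows of `A` lies in `I_k(A)`. By induction every `k`-minor of `Ã` lies in
`∑ rⁱ I_{k-i}(A)`. Conversely, a `j`-minor of `A` on columns `c`, extended by `i` rows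
`r • eᵦ` and the columns `b` for `i` further indices `b ∉ c` (possible as `j + i ≤ m`), is a
block upper triangular `(j + i)`-minor of `Ã` with determinant `rⁱ` times the minor.
-/

open Finset Function Matrix

section SumOfPowerMultiples

variable {R : Type*} [CommRing R] (I : ℕ → Ideal R) (r : R)

theorem le_sum_span_pow_mul (k : ℕ) :
    I k ≤ ∑ i ∈ range (k + 1), Ideal.span {r ^ i} * I (k - i) := by
  refine le_trans ?_ (single_le_sum (f := fun i => Ideal.span {r ^ i} * I (k - i))
    (fun _ _ => zero_le) (mem_range.mpr k.succ_pos))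
  simp

theorem span_singleton_mul_sum_span_pow_mul_le (k : ℕ) :
    Ideal.span {r} * ∑ i ∈ range (k + 1), Ideal.span {r ^ i} * I (k - i) ≤
      ∑ i ∈ range (k + 2), Ideal.span {r ^ i} * I (k + 1 - i) := by
  have shift : ∀ i ∈ range (k + 1), Ideal.span {r} * (Ideal.span {r ^ i} * I (k - i)) =
      Ideal.span {r ^ (i + 1)} * I (k + 1 - (i + 1)) := fun i _ => by
    rw [← mul_assoc, Ideal.span_singleton_mul_span_singleton, ← pow_succ', Nat.succ_sub_succ]
  rw [mul_sum, sum_congr rfl shift, sum_range_succ' _ (k + 1)]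
  exact le_self_add

end SumOfPowerMultiples

theorem Matrix.det_succ_of_row_eq_single {R : Type*} [CommRing R] {k : ℕ}
    (M : Matrix (Fin (k + 1)) (Fin (k + 1)) R) {i j : Fin (k + 1)} {a : R}
    (h : M i = Pi.single j a) :
    M.det = (-1) ^ (i + j : ℕ) * a * (M.submatrix i.succAbove j.succAbove).det := by
  rw [det_succ_row M i, sum_eq_single j (fun b _ hb => by simp [h, hb]) (by simp), h,
    Pi.single_eq_same]

theorem Sum.exists_eq_inr_or_eq_comp_inl {α β γ : Type*} (f : α → β ⊕ γ) :
    (∃ a c, f a = .inr c) ∨ ∃ f' : α → β, f = .inl ∘ f' := by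
  refine or_iff_not_imp_left.mpr fun h => ?_
  have hleft : ∀ a, (f a).isLeft := fun a => by
    cases hfa : f a
    · rfl
    · exact (h ⟨a, _, hfa⟩).elim
  exact ⟨fun a => (f a).getLeft (hleft a), funext fun a => by simp⟩

section Minors

variable {R : Type*} [CommRing R] {ι κ : Type*}

theorem det_submatrix_mem_minorsIdeal (A : Matrix ι κ R) {k : ℕ} {f : Fin k → ι}
    {g : Fin k → κ} (hf : Injective f) (hg : Injective g) :
    (A.submatrix f g).det ∈ minorsIdeal A k :=
  Ideal.subset_span ⟨f, g, hf, hg, rfl⟩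

theorem minorsIdeal_le_iff {A : Matrix ι κ R} {k : ℕ} {J : Ideal R} :
    minorsIdeal A k ≤ J ↔
      ∀ (f : Fin k → ι) (g : Fin k → κ), Injective f → Injective g →
        (A.submatrix f g).det ∈ J :=
  Ideal.span_le.trans ⟨fun h f g hf hg => h ⟨f, g, hf, hg, rfl⟩,
    by rintro h _ ⟨f, g, hf, hg, rfl⟩; exact h f g hf hg⟩

@[simp]
theorem minorsIdeal_zero (A : Matrix ι κ R) : minorsIdeal A 0 = ⊤ :=
  (Ideal.eq_top_iff_one _).mpr <| by
    simpa using det_submatrix_mem_minorsIdeal A (f := finZeroElim) (g := finZeroElim)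
      (injective_of_subsingleton _) (injective_of_subsingleton _)

theorem det_submatrix_mem_minorsIdeal_of_equiv (A : Matrix ι κ R) {α : Type*} [Fintype α]
    [DecidableEq α] {f : α → ι} {g : α → κ} (hf : Injective f) (hg : Injective g) {k : ℕ}
    (e : Fin k ≃ α) : (A.submatrix f g).det ∈ minorsIdeal A k := by
  rw [← det_submatrix_equiv_self e, submatrix_submatrix]
  exact det_submatrix_mem_minorsIdeal A (hf.comp e.injective) (hg.comp e.injective)

variable [DecidableEq κ]

theorem pow_mul_det_submatrix_mem_minorsIdeal_fromRows_diagonal [Fintype κ]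
    (A : Matrix ι κ R) (r : R) {i j : ℕ} (hk : j + i ≤ Fintype.card κ) {f : Fin j → ι}
    {g : Fin j → κ} (hf : Injective f) (hg : Injective g) :
    r ^ i * (A.submatrix f g).det ∈ minorsIdeal (fromRows A (diagonal fun _ => r)) (j + i) := by
  have hcard : Fintype.card (Fin i) ≤ Fintype.card ((Set.range g)ᶜ : Set κ) := by
    rw [Fintype.card_compl_set, Set.card_range_of_injective hg, Fintype.card_fin,
      Fintype.card_fin]
    omega
  obtain ⟨emb⟩ := Embedding.nonempty_of_card_le hcard
  set w : Fin i → κ := fun b => emb b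
  have hw : Injective w := Subtype.val_injective.comp emb.injective
  have hgw : ∀ a b, g a ≠ w b := fun a b hab => (emb b).2 ⟨a, hab⟩
  have hblock : (fromRows A (diagonal fun _ => r)).submatrix (Sum.map f w) (Sum.elim g w) =
      fromBlocks (A.submatrix f g) (A.submatrix f w) 0 (diagonal fun _ => r) := by
    ext (a | b) (a' | b')
    · rfl
    · rfl
    · exact if_neg (hgw a' b).symm
    · simp [hw.eq_iff, diagonal_apply]
  have hmem := det_submatrix_mem_minorsIdeal_of_equiv (fromRows A (diagonal fun _ => r))
    (hf.sumMap hw) (hg.sumElim hw hgw) finSumFinEquiv.symm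
  rwa [hblock, det_fromBlocks_zero₂₁, det_diagonal, prod_const, card_univ, Fintype.card_fin,
    mul_comm] at hmem

theorem span_pow_mul_minorsIdeal_le_minorsIdeal_fromRows_diagonal [Fintype κ]
    (A : Matrix ι κ R) (r : R) {i j : ℕ} (hk : j + i ≤ Fintype.card κ) :
    Ideal.span {r ^ i} * minorsIdeal A j ≤
      minorsIdeal (fromRows A (diagonal fun _ => r)) (j + i) := by
  have hcolon : minorsIdeal A j ≤
      (minorsIdeal (fromRows A (diagonal fun _ => r)) (j + i)).colon {r ^ i} :=
    minorsIdeal_le_iff.mpr fun f g hf hg => Submodule.mem_colon_singleton.mpr <| by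
      rw [smul_eq_mul, mul_comm]
      exact pow_mul_det_submatrix_mem_minorsIdeal_fromRows_diagonal A r hk hf hg
  refine Ideal.span_singleton_mul_le_iff.mpr fun z hz => ?_
  rw [mul_comm]
  exact Submodule.mem_colon_singleton.mp (hcolon hz)

theorem det_submatrix_fromRows_diagonal_mem_sum (A : Matrix ι κ R) (r : R) {k : ℕ}
    (f : Fin k → ι ⊕ κ) (g : Fin k → κ) (hf : Injective f) (hg : Injective g) :
    ((fromRows A (diagonal fun _ => r)).submatrix f g).det ∈
      ∑ i ∈ range (k + 1), Ideal.span {r ^ i} * minorsIdeal A (k - i) := by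
  induction k with
  | zero => simp
  | succ k ih =>
    obtain ⟨a, b, hfa⟩ | ⟨f', rfl⟩ := Sum.exists_eq_inr_or_eq_comp_inl f
    · by_cases hb : ∃ c, g c = b
      · obtain ⟨c, rfl⟩ := hb
        have hrow : (fromRows A (diagonal fun _ => r)).submatrix f g a = Pi.single c r := by
          ext l
          simp [hfa, diagonal_apply, Pi.single_apply, hg.eq_iff, eq_comm]
        rw [det_succ_of_row_eq_single _ hrow, mul_assoc, submatrix_submatrix]
        refine Ideal.mul_mem_left _ _ <|
          span_singleton_mul_sum_span_pow_mul_le (minorsIdeal A) r k <|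
            Ideal.mul_mem_mul (Ideal.mem_span_singleton_self r) <|
              ih _ _ (hf.comp Fin.succAbove_right_injective)
                (hg.comp Fin.succAbove_right_injective)
      · have hzero : ∀ l, (fromRows A (diagonal fun _ => r)).submatrix f g a l = 0 := fun l => by
          simp [hfa, Ne.symm fun h => hb ⟨l, h⟩]
        rw [det_eq_zero_of_row_eq_zero a hzero]
        exact zero_mem _
    · exact le_sum_span_pow_mul (minorsIdeal A) r _ <|
        det_submatrix_mem_minorsIdeal A hf.of_comp hg

end Minors

/-- **Minors of a matrix stacked over a scalar matrix.**
Let `R` be a commutative ring, `A` an `n×m` matrix over `R`, `r ∈ R`, and let `Ã` be the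
`(n+m)×m` matrix obtained by stacking `A` on top of `r·1_m`.  Then for `0 ≤ k ≤ m`,
`I_k(Ã) = ∑_{i=0}^{k} r^i · I_{k−i}(A)`, where `I_j` denotes the ideal generated by the
`j×j` minors. -/
theorem minors_stack_scalar {R : Type*} [CommRing R] (n m : ℕ)
    (A : Matrix (Fin n) (Fin m) R) (r : R) (k : ℕ) (hk : k ≤ m) :
    minorsIdeal
      (Matrix.of fun (i : Fin n ⊕ Fin m) (j : Fin m) =>
        Sum.casesOn i (fun i' => A i' j) (fun i' => if i' = j then r else 0)) k
    = ∑ i ∈ Finset.range (k + 1), Ideal.span {r ^ i} * minorsIdeal A (k - i) := by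
  have hstack : (Matrix.of fun (i : Fin n ⊕ Fin m) (j : Fin m) =>
      Sum.casesOn i (fun i' => A i' j) (fun i' => if i' = j then r else 0)) =
      fromRows A (diagonal fun _ => r) := by
    ext (i | i) j <;> rfl
  rw [hstack]
  refine le_antisymm (minorsIdeal_le_iff.mpr fun f g hf hg =>
    det_submatrix_fromRows_diagonal_mem_sum A r f g hf hg) ?_
  rw [Ideal.sum_eq_sup, Finset.sup_le_iff]
  intro i hi
  have hik : k - i + i = k := Nat.sub_add_cancel (Nat.lt_succ_iff.mp (mem_range.mp hi))
  simpa only [hik] using span_pow_mul_minorsIdeal_le_minorsIdeal_fromRows_diagonal A r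
    (i := i) (j := k - i) (by simpa [hik])
end

section
/- Let O be a compact discrete valuation ring with normalized valuation ν and uniformizer π. Let C ∈ Mat_{ℓ×m}(O) be a matrix of rank r over the fraction field K, with elementary divisor exponents λ_1(C) ≤ ⋯ ≤ λ_r(C). Let y_1, …, y_d ∈ O be nonzero, and let C̃ be the (ℓ+dm)×m matrix obtained by stacking C above the blocks y_1·1_m, …, y_d·1_m. Then C̃ has rank m over K, and its elementary divisor exponents are λ_i(C̃) = min(λ_i(C), ν(y_1), …, ν(y_d)) for i = 1,…,r, and λ_i(C̃) = min(ν(y_1), …, ν(y_d)) for i = r+1,…,m. -/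
/-!
Multiplying `C̃` by `diag(P, 1 ⊗ Q⁻¹)` on the left and by `Q` on the right replaces `C` by its
Smith form and leaves the blocks `y_s • 1` unchanged. In the resulting matrix each column `j`
contains a row that vanishes outside column `j` and whose entry is a unit times
`π ^ min(λ_j, ν(y_1), …, ν(y_{d+1}))`, which divides the whole column. Row operations clear
the rest of the column, normalise the pivot to a power of `π` and move it to the diagonal
position. The rank is `m` since a single block `y_s • 1` is already invertible over `K`.
-/

open Function

namespace Matrix

variable {R α n : Type*} [CommRing R]

section RowEquivalent

variable [Fintype α] [DecidableEq α]

def RowEquivalent (M N : Matrix α n R) : Prop :=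
  ∃ P : Matrix α α R, IsUnit P.det ∧ P * M = N

theorem RowEquivalent.trans {M N L : Matrix α n R} (h₁ : M.RowEquivalent N)
    (h₂ : N.RowEquivalent L) : M.RowEquivalent L := by
  obtain ⟨P₁, hP₁, rfl⟩ := h₁
  obtain ⟨P₂, hP₂, rfl⟩ := h₂
  exact ⟨P₂ * P₁, by simpa using hP₂.mul hP₁, Matrix.mul_assoc _ _ _⟩

theorem rowEquivalent_mul_of_mul_eq_one {P P' : Matrix α α R} (h : P * P' = 1)
    (M : Matrix α n R) : M.RowEquivalent (P * M) :=
  ⟨P, isUnit_det_of_right_inverse h, rfl⟩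

def pivotMatrix (k : n → α) (x : n → R) : Matrix α n R :=
  of fun a j => if a = k j then x j else 0

theorem pivotMatrix_unit_mul_rowEquivalent {k : n → α} (hk : Injective k) (u : n → Rˣ)
    (x : n → R) : (pivotMatrix k fun j => (u j : R) * x j).RowEquivalent (pivotMatrix k x) := by
  set w : α → Rˣ := extend k (fun j => (u j)⁻¹) 1
  refine ⟨diagonal fun a => (w a : R), ?_, ?_⟩
  · rw [det_diagonal, ← Units.coe_prod]
    exact Units.isUnit _
  · ext a j
    by_cases ha : a = k j
    · simp [pivotMatrix, ha, w, hk.extend_apply]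
    · simp [pivotMatrix, ha]

theorem pivotMatrix_rowEquivalent_pivotMatrix {k t : n → α} (hk : Injective k)
    (ht : Injective t) (x : n → R) : (pivotMatrix k x).RowEquivalent (pivotMatrix t x) := by
  classical
  set σ : Equiv.Perm α :=
    ((Equiv.ofInjective t ht).symm.trans (Equiv.ofInjective k hk)).extendSubtype
  have hσ : ∀ j, σ (t j) = k j := fun j => by
    simp [σ, Equiv.extendSubtype_apply_of_mem _ _ (Set.mem_range_self j)]
  refine ⟨σ.permMatrix R, by simpa using (Equiv.Perm.sign σ).isUnit.map (Int.castRingHom R), ?_⟩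
  ext a j
  simp only [pivotMatrix, PEquiv.toMatrix_toPEquiv_mul, submatrix_apply, of_apply, id, ← hσ,
    σ.injective.eq_iff]

variable [Fintype n] [DecidableEq n]

theorem rowEquivalent_pivotMatrix_of_rows_eq_single {M : Matrix α n R} {k : n → α}
    (hk : Injective k) {p : n → R} (hpiv : ∀ j, M (k j) = Pi.single j (p j))
    (hdvd : ∀ a j, p j ∣ M a j) : M.RowEquivalent (pivotMatrix k p) := by
  classical
  choose c hc using hdvd
  -- Row `a ∉ range k` equals `∑ j, c a j • M (k j)`; `1 - C * S` subtracts exactly that and is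
  -- invertible because `S * C = 0`.
  set C : Matrix α n R := of fun a j => if a ∈ Set.range k then 0 else c a j
  set S : Matrix n α R := of fun j a => if a = k j then 1 else 0
  have hSC : S * C = 0 := by
    ext j j'
    simp only [S, C, mul_apply, of_apply, ite_mul, one_mul, zero_mul, Finset.sum_ite_eq',
      Finset.mem_univ, if_true, Set.mem_range_self, zero_apply]
  have hSM : S * M = M.submatrix k id := by
    ext j j'
    simp [S, mul_apply]
  have hF : (1 - C * S) * (1 + C * S) = 1 := by
    rw [Matrix.sub_mul, Matrix.one_mul, Matrix.mul_add, Matrix.mul_one, Matrix.mul_assoc C S,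
      ← Matrix.mul_assoc S, hSC]
    simp
  convert rowEquivalent_mul_of_mul_eq_one hF M using 1
  ext a j
  rw [Matrix.sub_mul, Matrix.one_mul, Matrix.mul_assoc, hSM]
  by_cases ha : a ∈ Set.range k
  · obtain ⟨j₀, rfl⟩ := ha
    by_cases h : j = j₀ <;>
      simp [pivotMatrix, C, mul_apply, hpiv, Pi.single_apply, hk.eq_iff, eq_comm, h]
  · have : ∀ j, a ≠ k j := fun j h => ha ⟨j, h.symm⟩
    simp [pivotMatrix, C, mul_apply, this, hc a j, mul_comm, Set.mem_range.not.mp ha, hpiv,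
      Pi.single_apply]

theorem rowEquivalent_pivotMatrix_of_dvd {M : Matrix α n R} {t : n → α} (ht : Injective t)
    {x : n → R} (hx : ∀ j, x j ≠ 0) (hpiv : ∀ j, ∃ a, ∃ u : Rˣ, M a = Pi.single j (u * x j))
    (hdvd : ∀ a j, x j ∣ M a j) : M.RowEquivalent (pivotMatrix t x) := by
  choose k u hku using hpiv
  have hk : Injective k := fun j j' h => by
    by_contra hne
    have := congr_fun (hku j') j
    rw [← h, hku j, Pi.single_eq_same, Pi.single_eq_of_ne hne] at this
    exact hx j ((Units.mul_right_eq_zero _).mp this)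
  have hdvd' : ∀ a j, (u j : R) * x j ∣ M a j := fun a j => Units.mul_left_dvd.mpr (hdvd a j)
  exact ((rowEquivalent_pivotMatrix_of_rows_eq_single hk hku hdvd').trans
    (pivotMatrix_unit_mul_rowEquivalent hk u x)).trans
    (pivotMatrix_rowEquivalent_pivotMatrix hk ht x)

end RowEquivalent

theorem rank_eq_card_of_isUnit_submatrix [Fintype α] [Fintype n] [DecidableEq n]
    [StrongRankCondition R] {A : Matrix α n R} (f : n → α) (h : IsUnit (A.submatrix f id)) :
    A.rank = Fintype.card n :=
  le_antisymm A.rank_le_card_width ((rank_of_isUnit _ h).symm.trans_le (rank_submatrix_le _ _ _))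

section ScalarBlocks

open scoped Kronecker

variable {ι m : Type*} [DecidableEq n]

def scalarBlocks (y : ι → R) : Matrix (ι × n) n R :=
  of fun p j => if p.2 = j then y p.1 else 0

theorem scalarBlocks_map {S : Type*} [CommRing S] (y : ι → R) (f : R →+* S) :
    (scalarBlocks y : Matrix (ι × n) n R).map f = scalarBlocks (f ∘ y) := by
  ext p j
  simp [scalarBlocks, apply_ite f]

variable [Fintype n] [Fintype ι]

-- Without the ascriptions `n` is still unknown when `*` is elaborated, and the `CStarMatrix`
-- multiplication instance gets picked.
theorem scalarBlocks_mul [DecidableEq ι] (y : ι → R) (Q : Matrix n n R) :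
    (scalarBlocks y : Matrix (ι × n) n R) * Q =
      ((1 : Matrix ι ι R) ⊗ₖ Q) * (scalarBlocks y : Matrix (ι × n) n R) := by
  ext ⟨s, i⟩ j
  rw [mul_apply, mul_apply, Fintype.sum_prod_type]
  simp [scalarBlocks, one_apply, mul_comm]

theorem fromRows_scalarBlocks_mul_rowEquivalent [DecidableEq ι] [Fintype m] [DecidableEq m]
    {C D : Matrix m n R} {P : Matrix m m R} {Q : Matrix n n R} (hP : IsUnit P.det)
    (hQ : IsUnit Q.det) (h : P * C * Q = D) (y : ι → R) :
    (fromRows C (scalarBlocks y) * Q).RowEquivalent (fromRows D (scalarBlocks y)) := by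
  refine ⟨fromBlocks P 0 0 (1 ⊗ₖ Q⁻¹), ?_, ?_⟩
  · rw [det_fromBlocks_zero₁₂, det_kronecker, det_one, one_pow, one_mul]
    exact hP.mul ((isUnit_nonsing_inv_det Q hQ).pow _)
  · rw [fromRows_mul, fromBlocks_mul_fromRows, Matrix.zero_mul, Matrix.zero_mul, add_zero,
      zero_add, ← Matrix.mul_assoc, h, scalarBlocks_mul, ← Matrix.mul_assoc, ← mul_kronecker_mul,
      nonsing_inv_mul Q hQ, Matrix.one_mul, one_kronecker_one, Matrix.one_mul]

theorem rank_fromRows_scalarBlocks [Fintype m] {K : Type*} [Field K] (A : Matrix m n K)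
    {y : ι → K} {s : ι} (hs : y s ≠ 0) : (fromRows A (scalarBlocks y)).rank = Fintype.card n := by
  refine rank_eq_card_of_isUnit_submatrix (fun j => .inr (s, j)) ?_
  convert (scalar n).isUnit_map (isUnit_iff_ne_zero.mpr hs)
  ext i j
  simp [scalarBlocks, diagonal_apply, eq_comm]

end ScalarBlocks

end Matrix

section StackedSmithForm

open Matrix Finset

variable {O ι : Type*} [CommRing O] {ℓ m r : ℕ}

def smithBlock (π : O) (lam : Fin r → ℕ) : Matrix (Fin ℓ) (Fin m) O :=
  of fun i j => if h : (i : ℕ) = j ∧ (i : ℕ) < r then π ^ lam ⟨i, h.2⟩ else 0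

def stackedDiagIndex (s₀ : ι) (j : Fin m) : Fin ℓ ⊕ ι × Fin m :=
  if h : (j : ℕ) < ℓ then .inl ⟨j, h⟩ else .inr (s₀, j)

theorem stackedDiagIndex_injective (s₀ : ι) :
    Function.Injective (stackedDiagIndex (ℓ := ℓ) (m := m) s₀) := fun j j' h => by
  simp only [stackedDiagIndex] at h
  split_ifs at h <;> simp_all [Fin.ext_iff]

theorem pivotMatrix_stackedDiagIndex [DecidableEq ι] (s₀ : ι) (x : Fin m → O) :
    pivotMatrix (stackedDiagIndex (ℓ := ℓ) s₀) x = of fun a j => Sum.casesOn a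
      (fun i => if (i : ℕ) = j then x j else 0)
      (fun p => if p.1 = s₀ ∧ p.2 = j ∧ ℓ ≤ (j : ℕ) then x j else 0) := by
  ext (i | ⟨s, i⟩) j <;> by_cases hj : (j : ℕ) < ℓ <;>
    simp only [pivotMatrix, stackedDiagIndex, hj, dif_pos, dif_neg, not_false_eq_true, of_apply]
  · simp [Fin.ext_iff]
  · rw [if_neg Sum.inl_ne_inr, if_neg (by have := i.isLt; omega)]
  · rw [if_neg Sum.inr_ne_inl, if_neg fun h => hj.not_ge h.2.2]
  · simp [not_lt.mp hj]

variable [Fintype ι] [Nonempty ι]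

def stackedExponent (lam : Fin r → ℕ) (e : ι → ℕ) (j : Fin m) : ℕ :=
  if h : (j : ℕ) < r then min (lam ⟨j, h⟩) (univ.inf' univ_nonempty e)
  else univ.inf' univ_nonempty e

theorem stackedExponent_le_inf' (lam : Fin r → ℕ) (e : ι → ℕ) (j : Fin m) :
    stackedExponent lam e j ≤ univ.inf' univ_nonempty e := by
  unfold stackedExponent
  split_ifs
  exacts [min_le_right _ _, le_rfl]

theorem pow_stackedExponent_dvd (π : O) (lam : Fin r → ℕ) {e : ι → ℕ} {y : ι → O}
    (hy : ∀ s, ∃ u : O, IsUnit u ∧ y s = u * π ^ e s) (a : Fin ℓ ⊕ ι × Fin m) (j : Fin m) :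
    π ^ stackedExponent lam e j ∣ fromRows (smithBlock π lam) (scalarBlocks y) a j := by
  rcases a with i | ⟨s, i⟩
  · simp only [fromRows_apply_inl, smithBlock, of_apply]
    split_ifs with h
    · refine pow_dvd_pow _ ?_
      simp [stackedExponent, ← h.1, h.2]
    · exact dvd_zero _
  · simp only [fromRows_apply_inr, scalarBlocks, of_apply]
    split_ifs
    · obtain ⟨u, -, hu⟩ := hy s
      exact hu ▸ Dvd.dvd.mul_left (pow_dvd_pow _
        ((stackedExponent_le_inf' lam e j).trans (inf'_le _ (mem_univ s)))) _
    · exact dvd_zero _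

theorem exists_fromRows_smithBlock_eq_single (π : O) {lam : Fin r → ℕ} (hrl : r ≤ ℓ)
    {e : ι → ℕ} {y : ι → O} (hy : ∀ s, ∃ u : O, IsUnit u ∧ y s = u * π ^ e s) (j : Fin m) :
    ∃ a : Fin ℓ ⊕ ι × Fin m, ∃ u : Oˣ, fromRows (smithBlock π lam) (scalarBlocks y) a =
      Pi.single j (u * π ^ stackedExponent lam e j) := by
  -- The pivot is row `j` of the Smith block if `λ_j ≤ min e`, otherwise row `(s, j)` for an `s`
  -- with `e s` minimal.
  obtain ⟨s, -, hs⟩ := exists_mem_eq_inf' univ_nonempty e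
  obtain ⟨u, hu, hyu⟩ := hy s
  have hmin : stackedExponent lam e j = e s →
      fromRows (smithBlock π lam) (scalarBlocks y) (.inr (s, j) : Fin ℓ ⊕ ι × Fin m) =
        Pi.single j (hu.unit * π ^ stackedExponent lam e j) := fun h => by
    ext j'
    simp [scalarBlocks, Pi.single_apply, hyu, h, eq_comm]
  unfold stackedExponent at hmin ⊢
  by_cases hj : (j : ℕ) < r
  · by_cases hle : lam ⟨j, hj⟩ ≤ univ.inf' univ_nonempty e
    · refine ⟨.inl ⟨j, hj.trans_le hrl⟩, 1, ?_⟩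
      ext j'
      simp [smithBlock, hj, hle, Pi.single_apply, Fin.ext_iff, eq_comm]
      split_ifs <;> rfl
    · exact ⟨_, _, hmin (by rw [dif_pos hj, min_eq_right (not_le.mp hle).le, hs])⟩
  · exact ⟨_, _, hmin (by simp [hj, hs])⟩

theorem fromRows_smithBlock_scalarBlocks_rowEquivalent [IsDomain O] [DecidableEq ι] {π : O}
    (hπ : π ≠ 0) {lam : Fin r → ℕ} (hrl : r ≤ ℓ) {e : ι → ℕ} {y : ι → O}
    (hy : ∀ s, ∃ u : O, IsUnit u ∧ y s = u * π ^ e s)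
    {t : Fin m → Fin ℓ ⊕ ι × Fin m} (ht : Function.Injective t) :
    (fromRows (smithBlock π lam) (scalarBlocks y)).RowEquivalent
      (pivotMatrix t fun j => π ^ stackedExponent lam e j) :=
  rowEquivalent_pivotMatrix_of_dvd ht (fun _ => pow_ne_zero _ hπ)
    (exists_fromRows_smithBlock_eq_single π hrl hy) (pow_stackedExponent_dvd π lam hy)

end StackedSmithForm

theorem stacked_matrix_elementary_divisors_general {O : Type*} [CommRing O] [IsDomain O]
    (π : O) (hπ : Irreducible π)
    (ℓ m r d : ℕ) (hrl : r ≤ ℓ)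
    (C : Matrix (Fin ℓ) (Fin m) O) (lam : Fin r → ℕ)
    (hC : ∃ (P : Matrix (Fin ℓ) (Fin ℓ) O) (Q : Matrix (Fin m) (Fin m) O),
      IsUnit P.det ∧ IsUnit Q.det ∧
      P * C * Q = Matrix.of (fun (i : Fin ℓ) (j : Fin m) =>
        if h : (i : ℕ) = (j : ℕ) ∧ (i : ℕ) < r then π ^ lam ⟨(i : ℕ), h.2⟩ else 0))
    (y : Fin (d + 1) → O) (ey : Fin (d + 1) → ℕ)
    (hy : ∀ s, ∃ u : O, IsUnit u ∧ y s = u * π ^ ey s)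
    (Ct : Matrix (Fin ℓ ⊕ (Fin (d + 1) × Fin m)) (Fin m) O)
    (hCt : Ct = Matrix.of fun i j =>
      Sum.casesOn i (fun i' => C i' j) (fun p => if p.2 = j then y p.1 else 0)) :
    -- the `j`-th elementary divisor of `C̃`
    let E : ℕ := Finset.univ.inf' Finset.univ_nonempty ey
    let dentry : Fin m → O := fun j =>
      if h2 : (j : ℕ) < r then π ^ min (lam ⟨(j : ℕ), h2⟩) E else π ^ E
    (∃ (P : Matrix (Fin ℓ ⊕ (Fin (d + 1) × Fin m)) (Fin ℓ ⊕ (Fin (d + 1) × Fin m)) O)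
        (Q : Matrix (Fin m) (Fin m) O),
      IsUnit P.det ∧ IsUnit Q.det ∧
      P * Ct * Q = Matrix.of (fun i (j : Fin m) =>
        Sum.casesOn i
          (fun i' : Fin ℓ => if (i' : ℕ) = (j : ℕ) then dentry j else 0)
          (fun p : Fin (d + 1) × Fin m =>
            if p.1 = 0 ∧ p.2 = j ∧ ℓ ≤ (j : ℕ) then dentry j else 0))) ∧
    (Ct.map (algebraMap O (FractionRing O))).rank = m := by
  intro E dentry
  obtain ⟨P, Q, hP, hQ, hPCQ⟩ := hC
  have hCt' : Ct = Matrix.fromRows C (Matrix.scalarBlocks y) := by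
    rw [hCt]
    ext (i | p) j <;> rfl
  have hdentry : dentry = fun j => π ^ stackedExponent lam ey j :=
    funext fun _ => (apply_dite (π ^ ·) _ _ _).symm
  refine ⟨?_, ?_⟩
  · obtain ⟨P', hP', hP'Ct⟩ := (Matrix.fromRows_scalarBlocks_mul_rowEquivalent hP hQ hPCQ y).trans
      (fromRows_smithBlock_scalarBlocks_rowEquivalent hπ.ne_zero hrl hy
        (stackedDiagIndex_injective 0))
    refine ⟨P', Q, hP', hQ, ?_⟩
    rw [Matrix.mul_assoc, hCt', hP'Ct, pivotMatrix_stackedDiagIndex, hdentry]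
  · obtain ⟨u, hu, hyu⟩ := hy 0
    have hy0 : (algebraMap O (FractionRing O) ∘ y) 0 ≠ 0 := by
      rw [Function.comp_apply, hyu]
      simpa using ⟨hu.ne_zero, fun h => absurd h hπ.ne_zero⟩
    rw [hCt', Matrix.fromRows_map, Matrix.scalarBlocks_map,
      Matrix.rank_fromRows_scalarBlocks _ hy0, Fintype.card_fin]

/-- **Elementary divisors of a matrix stacked over scalar blocks, over a DVR.**
Let `O` be a discrete valuation ring with uniformiser `π` and fraction field `K`.  Let
`C` be an `ℓ×m` matrix over `O` of rank `r` over `K` with elementary divisor exponents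
`λ_1 ≤ ⋯ ≤ λ_r`, i.e. `C` is equivalent (under multiplication by invertible matrices over
`O`) to the `ℓ×m` matrix with diagonal entries `π^{λ_1}, …, π^{λ_r}` and zeros elsewhere.
Let `y_1, …, y_{d+1}` be nonzero elements of `O`, say `y_s` a unit times `π^{e_s}`, and let
`C̃` be the matrix obtained by stacking `C` above the blocks `y_1·1_m, …, y_{d+1}·1_m`.
Then `C̃` has rank `m` over `K`, and `C̃` is equivalent to the matrix of the same shape with
`m` "diagonal" entries `π^{min(λ_i, e_1, …, e_{d+1})}` for `i ≤ r` and
`π^{min(e_1, …, e_{d+1})}` for `r < i ≤ m` (diagonal positions beyond the `ℓ`-th row, if any,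
being placed among the stacked rows); i.e. its elementary divisor exponents are as stated. -/
theorem stacked_matrix_elementary_divisors {O : Type*} [CommRing O] [IsDomain O]
    [IsDiscreteValuationRing O] (π : O) (hπ : Irreducible π)
    (ℓ m r d : ℕ) (hrm : r ≤ m) (hrl : r ≤ ℓ)
    (C : Matrix (Fin ℓ) (Fin m) O) (lam : Fin r → ℕ) (hmono : Monotone lam)
    (hC : ∃ (P : Matrix (Fin ℓ) (Fin ℓ) O) (Q : Matrix (Fin m) (Fin m) O),
      IsUnit P.det ∧ IsUnit Q.det ∧
      P * C * Q = Matrix.of (fun (i : Fin ℓ) (j : Fin m) =>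
        if h : (i : ℕ) = (j : ℕ) ∧ (i : ℕ) < r then π ^ lam ⟨(i : ℕ), h.2⟩ else 0))
    (y : Fin (d + 1) → O) (ey : Fin (d + 1) → ℕ)
    (hy : ∀ s, ∃ u : O, IsUnit u ∧ y s = u * π ^ ey s)
    (Ct : Matrix (Fin ℓ ⊕ (Fin (d + 1) × Fin m)) (Fin m) O)
    (hCt : Ct = Matrix.of fun i j =>
      Sum.casesOn i (fun i' => C i' j) (fun p => if p.2 = j then y p.1 else 0)) :
    -- the `j`-th elementary divisor of `C̃`
    let E : ℕ := Finset.univ.inf' Finset.univ_nonempty ey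
    let dentry : Fin m → O := fun j =>
      if h2 : (j : ℕ) < r then π ^ min (lam ⟨(j : ℕ), h2⟩) E else π ^ E
    (∃ (P : Matrix (Fin ℓ ⊕ (Fin (d + 1) × Fin m)) (Fin ℓ ⊕ (Fin (d + 1) × Fin m)) O)
        (Q : Matrix (Fin m) (Fin m) O),
      IsUnit P.det ∧ IsUnit Q.det ∧
      P * Ct * Q = Matrix.of (fun i (j : Fin m) =>
        Sum.casesOn i
          (fun i' : Fin ℓ => if (i' : ℕ) = (j : ℕ) then dentry j else 0)
          (fun p : Fin (d + 1) × Fin m =>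
            if p.1 = 0 ∧ p.2 = j ∧ ℓ ≤ (j : ℕ) then dentry j else 0))) ∧
    (Ct.map (algebraMap O (FractionRing O))).rank = m :=
  stacked_matrix_elementary_divisors_general π hπ ℓ m r d hrl C lam hC y ey hy Ct hCt
end
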